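/- For n ≥ 1, the number of 2-colored set partitions of [n] avoiding both 1^1 2^1 and 1^2 2^1 in the pattern sense equals the number of 2-colored set partitions of [n] avoiding both 1^2 1^1 and 1^1 2^1 in the pattern sense. -/

import Mathlib

/-- `i` and `j` lie in the same block of the set partition `P`. -/
def SameBlock {n : ℕ} (P : Finpartition (Finset.univ : Finset (Fin n))) (i j : Fin n) : Prop :=
  ∃ b ∈ P.parts, i ∈ b ∧ j ∈ b

/-- A `k`-colored set partition of `[n]`: a set partition of `Fin n` together with a
color from `Fin k` for each element. -/
structure CPart (n k : ℕ) where
  part : Finpartition (Finset.univ : Finset (Fin n))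
  col : Fin n → Fin k

/-- Contains the pattern 1^1 1^1 : two elements of the same block with equal colors. -/
def Has11 {n k : ℕ} (σ : CPart n k) : Prop :=
  ∃ i j : Fin n, i < j ∧ SameBlock σ.part i j ∧ σ.col i = σ.col j

/-- Contains the pattern 1^1 1^2 : same block, smaller element has strictly smaller color. -/
def Has112 {n k : ℕ} (σ : CPart n k) : Prop :=
  ∃ i j : Fin n, i < j ∧ SameBlock σ.part i j ∧ σ.col i < σ.col j

/-- Contains the pattern 1^2 1^1 : same block, smaller element has strictly larger color. -/
def Has121 {n k : ℕ} (σ : CPart n k) : Prop :=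
  ∃ i j : Fin n, i < j ∧ SameBlock σ.part i j ∧ σ.col j < σ.col i

/-- Contains the pattern 1^1 2^1 : different blocks, equal colors. -/
def Has1121 {n k : ℕ} (σ : CPart n k) : Prop :=
  ∃ i j : Fin n, i < j ∧ ¬ SameBlock σ.part i j ∧ σ.col i = σ.col j

/-- Contains the pattern 1^1 2^2 : different blocks, smaller element has strictly smaller color. -/
def Has1122 {n k : ℕ} (σ : CPart n k) : Prop :=
  ∃ i j : Fin n, i < j ∧ ¬ SameBlock σ.part i j ∧ σ.col i < σ.col j

/-- Contains the pattern 1^2 2^1 : different blocks, smaller element has strictly larger color. -/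
def Has1221 {n k : ℕ} (σ : CPart n k) : Prop :=
  ∃ i j : Fin n, i < j ∧ ¬ SameBlock σ.part i j ∧ σ.col j < σ.col i

/-- The Bell number: the number of set partitions of an `m`-element set. -/
noncomputable def bell (m : ℕ) : ℕ := Nat.card (Finpartition (Finset.univ : Finset (Fin m)))

open Finset

variable {n : ℕ}

lemma sameBlock_refl (P : Finpartition (univ : Finset (Fin n))) (i : Fin n) :
    SameBlock P i i := by
  obtain ⟨t, ht, hit⟩ := P.exists_mem (mem_univ i)
  exact ⟨t, ht, hit, hit⟩

lemma sameBlock_symm {P : Finpartition (univ : Finset (Fin n))} {i j : Fin n}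
    (h : SameBlock P i j) : SameBlock P j i := by
  obtain ⟨b, hb, hi, hj⟩ := h
  exact ⟨b, hb, hj, hi⟩

def indisc (n : ℕ) : Finpartition (univ : Finset (Fin (n+1))) :=
  Finpartition.indiscrete (by simpa using Finset.univ_nonempty.ne_empty)

lemma indisc_parts (n : ℕ) : (indisc n).parts = {univ} := rfl

lemma sameBlock_indisc (i j : Fin (n+1)) : SameBlock (indisc n) i j :=
  ⟨univ, by simp [indisc_parts], mem_univ i, mem_univ j⟩

lemma compl_ne (A : Finset (Fin n)) (h0 : A ≠ ∅) : A ≠ Aᶜ := by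
  obtain ⟨x, hx⟩ := nonempty_iff_ne_empty.2 h0
  intro h
  have := hx
  rw [h, mem_compl] at this
  exact this hx

def twoBlock (A : Finset (Fin n)) (h0 : A ≠ ∅) (h1 : A ≠ univ) :
    Finpartition (univ : Finset (Fin n)) where
  parts := {A, Aᶜ}
  supIndep := by
    rw [Finset.supIndep_pair (compl_ne A h0)]
    exact disjoint_compl_right
  sup_parts := by
    simp [Finset.sup_insert, Finset.sup_singleton, Finset.union_compl]
  bot_notMem := by
    simp only [Finset.mem_insert, Finset.mem_singleton]
    rintro (h | h)
    · exact h0 h.symm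
    · exact h1 (by simpa using congrArg compl h.symm)

lemma twoBlock_parts (A : Finset (Fin n)) (h0 : A ≠ ∅) (h1 : A ≠ univ) :
    (twoBlock A h0 h1).parts = {A, Aᶜ} := rfl

lemma sameBlock_twoBlock (A : Finset (Fin n)) (h0 : A ≠ ∅) (h1 : A ≠ univ) (i j : Fin n) :
    SameBlock (twoBlock A h0 h1) i j ↔ (i ∈ A ↔ j ∈ A) := by
  constructor
  · rintro ⟨b, hb, hi, hj⟩
    rw [twoBlock_parts, Finset.mem_insert, Finset.mem_singleton] at hb
    rcases hb with rfl | rfl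
    · simp [hi, hj]
    · rw [mem_compl] at hi hj; simp [hi, hj]
  · intro h
    by_cases hi : i ∈ A
    · exact ⟨A, by simp [twoBlock_parts], hi, h.1 hi⟩
    · exact ⟨Aᶜ, by simp [twoBlock_parts], mem_compl.2 hi,
        mem_compl.2 fun hj => hi (h.2 hj)⟩

lemma parts_eq_singleton (P : Finpartition (univ : Finset (Fin (n+1))))
    (h : ∀ i j, SameBlock P i j) : P.parts = {univ} := by
  obtain ⟨b, hb, h0b⟩ := P.exists_mem (mem_univ (0 : Fin (n+1)))
  have hbu : b = univ := by
    apply Finset.eq_univ_of_forall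
    intro j
    obtain ⟨c, hc, h0c, hjc⟩ := h 0 j
    rw [P.eq_of_mem_parts hb hc h0b h0c]
    exact hjc
  subst hbu
  apply Finset.eq_singleton_iff_unique_mem.2
  refine ⟨hb, fun c hc => ?_⟩
  obtain ⟨x, hx⟩ := P.nonempty_of_mem_parts hc
  exact P.eq_of_mem_parts hc hb hx (mem_univ x)

lemma parts_eq_pair (P : Finpartition (univ : Finset (Fin n))) (c : Fin n → Fin 2)
    (hiff : ∀ i j, SameBlock P i j ↔ c i = c j) {u v : Fin n}
    (hu : c u = 0) (hv : c v = 1) :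
    P.parts = {univ.filter (fun x => c x = 0), univ.filter (fun x => c x = 1)} := by
  have key : ∀ b ∈ P.parts, ∀ x ∈ b, b = univ.filter (fun y => c y = c x) := by
    intro b hb x hx
    ext y
    simp only [Finset.mem_filter, Finset.mem_univ, true_and]
    constructor
    · intro hy
      exact ((hiff x y).1 ⟨b, hb, hx, hy⟩).symm
    · intro hy
      obtain ⟨b', hb', hxb', hyb'⟩ := (hiff x y).2 hy.symm
      rwa [P.eq_of_mem_parts hb hb' hx hxb']
  have mem : ∀ (w : Fin n), univ.filter (fun y => c y = c w) ∈ P.parts := by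
    intro w
    obtain ⟨b, hb, hwb⟩ := P.exists_mem (mem_univ w)
    rw [← key b hb w hwb]
    exact hb
  ext b
  simp only [Finset.mem_insert, Finset.mem_singleton]
  constructor
  · intro hb
    obtain ⟨x, hx⟩ := P.nonempty_of_mem_parts hb
    have := key b hb x hx
    have hcx : c x = 0 ∨ c x = 1 := by omega
    rcases hcx with h | h <;> rw [h] at this
    · exact Or.inl this
    · exact Or.inr this
  · rintro (rfl | rfl)
    · have := mem u; rwa [hu] at this
    · have := mem v; rwa [hv] at this

/-- if same-block iff same-color and both colors occur, equal to a twoBlock partition -/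
lemma eq_twoBlock (P : Finpartition (univ : Finset (Fin n))) (c : Fin n → Fin 2)
    (hiff : ∀ i j, SameBlock P i j ↔ c i = c j) {u v : Fin n}
    (hu : c u = 0) (hv : c v = 1) (h0 : univ.filter (fun x => c x = 0) ≠ ∅)
    (h1 : univ.filter (fun x => c x = 0) ≠ univ) :
    P = twoBlock (univ.filter (fun x => c x = 0)) h0 h1 := by
  apply Finpartition.ext
  rw [twoBlock_parts, parts_eq_pair P c hiff hu hv]
  have : univ.filter (fun x => c x = 1) = (univ.filter (fun x : Fin n => c x = 0))ᶜ := by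
    ext x
    simp only [Finset.mem_filter, Finset.mem_univ, true_and, Finset.mem_compl]
    omega
  rw [this]

/-- monotone 2-colorings are thresholds at the count of 0s -/
lemma threshold {N : ℕ} (c : Fin N → Fin 2) (hmono : ∀ i j : Fin N, i ≤ j → c i ≤ c j)
    (i : Fin N) :
    c i = (if (i : ℕ) < (univ.filter (fun x => c x = 0)).card then 0 else 1) := by
  set S := univ.filter (fun x : Fin N => c x = 0) with hS
  have hcard : ∀ j : Fin N, c j = 0 ↔ (j : ℕ) < S.card := by
    intro j
    constructor
    · intro hj
      have hsub : Finset.Iic j ⊆ S := by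
        intro x hx
        simp only [hS, mem_filter, mem_univ, true_and]
        have := hmono x j (mem_Iic.1 hx)
        omega
      have := Finset.card_le_card hsub
      rw [Fin.card_Iic] at this
      omega
    · intro hj
      by_contra hne
      have hsub : S ⊆ Finset.Iio j := by
        intro x hx
        simp only [hS, mem_filter, mem_univ, true_and] at hx
        rw [mem_Iio]
        by_contra hge
        have := hmono j x (le_of_not_gt hge)
        omega
      have := Finset.card_le_card hsub
      rw [Fin.card_Iio] at this
      omega
  split_ifs with h
  · exact (hcard i).2 h
  · have := hcard i
    omega

lemma Iio_ne_empty {m : Fin (n+1)} (hm : m ≠ 0) : Finset.Iio m ≠ ∅ := by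
  have : (0 : Fin (n+1)) ∈ Finset.Iio m := by
    rw [Finset.mem_Iio]
    exact Fin.pos_of_ne_zero hm
  intro h
  rw [h] at this
  exact absurd this (Finset.notMem_empty _)

lemma Iio_ne_univ (m : Fin (n+1)) : Finset.Iio m ≠ univ := by
  intro h
  have : m ∈ Finset.Iio m := h ▸ mem_univ m
  exact absurd (Finset.mem_Iio.1 this) (lt_irrefl m)

/-- model map for side A -/
def gA (n : ℕ) : ((Fin (n+1) → Fin 2) ⊕ {m : Fin (n+1) // m ≠ 0}) → CPart (n+1) 2
  | .inl c => ⟨indisc n, c⟩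
  | .inr m => ⟨twoBlock (Finset.Iio m.1) (Iio_ne_empty m.2) (Iio_ne_univ m.1),
      fun i => if i < m.1 then 0 else 1⟩

lemma gA_avoids (n : ℕ) (x : (Fin (n+1) → Fin 2) ⊕ {m : Fin (n+1) // m ≠ 0}) :
    ¬ Has1121 (gA n x) ∧ ¬ Has1221 (gA n x) := by
  match x with
  | .inl c =>
    constructor
    · rintro ⟨i, j, _, hns, _⟩
      exact hns (sameBlock_indisc i j)
    · rintro ⟨i, j, _, hns, _⟩
      exact hns (sameBlock_indisc i j)
  | .inr m =>
    have key : ∀ i j : Fin (n+1), i < j → ¬ SameBlock (gA n (.inr m)).part i j →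
        (gA n (.inr m)).col i = 0 ∧ (gA n (.inr m)).col j = 1 := by
      intro i j hij hns
      simp only [gA] at hns ⊢
      rw [sameBlock_twoBlock] at hns
      simp only [Finset.mem_Iio] at hns
      have : i < m.1 ∧ ¬ j < m.1 := by
        rcases lt_or_ge i m.1 with h | h
        · refine ⟨h, fun hj => hns ?_⟩
          simp [h, hj]
        · exfalso
          exact hns (by constructor <;> intro hh <;> omega)
      rw [if_pos this.1, if_neg this.2]
      exact ⟨rfl, rfl⟩
    constructor
    · rintro ⟨i, j, hij, hns, heq⟩
      obtain ⟨h0, h1⟩ := key i j hij hns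
      rw [h0, h1] at heq
      exact absurd heq (by decide)
    · rintro ⟨i, j, hij, hns, hlt⟩
      obtain ⟨h0, h1⟩ := key i j hij hns
      rw [h0, h1] at hlt
      exact absurd hlt (by decide)

lemma univ_notmem_pair (A : Finset (Fin n)) (h0 : A ≠ ∅) (h1 : A ≠ univ) :
    (univ : Finset (Fin n)) ∉ ({A, Aᶜ} : Finset (Finset (Fin n))) := by
  simp only [Finset.mem_insert, Finset.mem_singleton]
  rintro (h | h)
  · exact h1 h.symm
  · apply h0
    have := congrArg compl h
    simpa using this.symm

lemma threshold_inj {N : ℕ} (m m' : Fin N)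
    (h : (fun i : Fin N => if i < m then (0 : Fin 2) else 1) =
      (fun i => if i < m' then 0 else 1)) : m = m' := by
  by_contra hne
  rcases lt_or_gt_of_ne hne with hlt | hlt
  · have := congrFun h m
    rw [if_neg (lt_irrefl m), if_pos hlt] at this
    exact absurd this (by decide)
  · have := congrFun h m'
    rw [if_pos hlt, if_neg (lt_irrefl m')] at this
    exact absurd this (by decide)

lemma gA_injective (n : ℕ) : Function.Injective (gA n) := by
  rintro (c | m) (c' | m') h
  · exact congrArg Sum.inl (congrArg CPart.col h : c = c')
  · exfalso
    have hp := congrArg (fun σ => σ.part.parts) h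
    simp only [gA, indisc_parts, twoBlock_parts] at hp
    have : (univ : Finset (Fin (n+1))) ∈ ({Finset.Iio m'.1, (Finset.Iio m'.1)ᶜ} :
        Finset (Finset (Fin (n+1)))) := by
      rw [← hp]; simp
    exact univ_notmem_pair _ (Iio_ne_empty m'.2) (Iio_ne_univ m'.1) this
  · exfalso
    have hp := congrArg (fun σ => σ.part.parts) h
    simp only [gA, indisc_parts, twoBlock_parts] at hp
    have : (univ : Finset (Fin (n+1))) ∈ ({Finset.Iio m.1, (Finset.Iio m.1)ᶜ} :
        Finset (Finset (Fin (n+1)))) := by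
      rw [hp]; simp
    exact univ_notmem_pair _ (Iio_ne_empty m.2) (Iio_ne_univ m.1) this
  · have hc := congrArg CPart.col h
    simp only [gA] at hc
    exact congrArg Sum.inr (Subtype.ext (threshold_inj m.1 m'.1 hc))

lemma gA_surjective (n : ℕ) (p : Finpartition (univ : Finset (Fin (n+1)))) (co : Fin (n+1) → Fin 2)
    (hσ : ¬ Has1121 (⟨p, co⟩ : CPart (n+1) 2) ∧ ¬ Has1221 (⟨p, co⟩ : CPart (n+1) 2)) :
    ∃ x, gA n x = ⟨p, co⟩ := by
  have cond : ∀ i j : Fin (n+1), i < j → ¬ SameBlock p i j → co i = 0 ∧ co j = 1 := by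
    intro i j hij hns
    have h1 : ¬ (co i = co j) := fun h => hσ.1 ⟨i, j, hij, hns, h⟩
    have h2 : ¬ (co j < co i) := fun h => hσ.2 ⟨i, j, hij, hns, h⟩
    omega
  by_cases hall : ∀ i j, SameBlock p i j
  · refine ⟨.inl co, ?_⟩
    have hp : p = indisc n :=
      Finpartition.ext (by rw [parts_eq_singleton p hall, indisc_parts])
    rw [show gA n (.inl co) = ⟨indisc n, co⟩ from rfl, hp]
  · push_neg at hall
    obtain ⟨i0, j0, hns0⟩ := hall
    have hne0 : i0 ≠ j0 := fun h => hns0 (h ▸ sameBlock_refl p i0)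
    obtain ⟨a, b, hab, hnab⟩ : ∃ a b : Fin (n+1), a < b ∧ ¬ SameBlock p a b := by
      rcases lt_or_gt_of_ne hne0 with h | h
      · exact ⟨i0, j0, h, hns0⟩
      · exact ⟨j0, i0, h, fun hs => hns0 (sameBlock_symm hs)⟩
    have ha : co a = 0 ∧ co b = 1 := cond a b hab hnab
    have ecsb : ∀ i j, co i = co j → SameBlock p i j := by
      intro i j heq
      by_contra hns'
      rcases lt_trichotomy i j with h | h | h
      · have := cond i j h hns'; omega
      · exact hns' (h ▸ sameBlock_refl p i)
      · have := cond j i h (fun hs => hns' (sameBlock_symm hs)); omega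
    have sbec : ∀ i j, SameBlock p i j → co i = co j := by
      intro i j hsb
      by_contra hneq
      obtain ⟨blk, hblk, hi, hj⟩ := hsb
      obtain ⟨x, hx, y, hy, hx0, hy1⟩ :
          ∃ x ∈ blk, ∃ y ∈ blk, co x = 0 ∧ co y = 1 := by
        rcases (show co i = 0 ∧ co j = 1 ∨ co i = 1 ∧ co j = 0 by omega) with ⟨h1, h2⟩ | ⟨h1, h2⟩
        · exact ⟨i, hi, j, hj, h1, h2⟩
        · exact ⟨j, hj, i, hi, h2, h1⟩
      obtain ⟨b', hb', hab', hxb'⟩ := ecsb a x (by rw [ha.1, hx0])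
      have hablk : a ∈ blk := (p.eq_of_mem_parts hb' hblk hxb' hx) ▸ hab'
      obtain ⟨b'', hb'', hbb'', hyb''⟩ := ecsb b y (by rw [ha.2, hy1])
      have hbblk : b ∈ blk := (p.eq_of_mem_parts hb'' hblk hyb'' hy) ▸ hbb''
      exact hnab ⟨blk, hblk, hablk, hbblk⟩
    have hiff : ∀ i j, SameBlock p i j ↔ co i = co j := fun i j => ⟨sbec i j, ecsb i j⟩
    have hmono : ∀ i j : Fin (n+1), i ≤ j → co i ≤ co j := by
      intro i j hij
      rcases eq_or_lt_of_le hij with rfl | hlt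
      · exact le_refl _
      · by_contra hgt
        have hlt' : co j < co i := lt_of_not_ge hgt
        have hns' : ¬ SameBlock p i j := fun hs => by have := sbec i j hs; omega
        have := cond i j hlt hns'
        omega
    set S := univ.filter (fun x => co x = 0) with hS
    have hthr : ∀ i, co i = (if (i : ℕ) < S.card then 0 else 1) := threshold co hmono
    have hcard_pos : 0 < S.card := card_pos.2 ⟨a, by simp [hS, ha.1]⟩
    have hbs : b ∉ S := by
      simp only [hS, mem_filter, mem_univ, true_and]
      omega
    have hSne : S ≠ univ := fun h => hbs (by rw [h]; exact mem_univ b)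
    have hcard_lt : S.card < n + 1 := by
      have := S.card_lt_iff_ne_univ.2 hSne
      simpa using this
    set m : Fin (n+1) := ⟨S.card, hcard_lt⟩ with hm
    have hm0 : m ≠ 0 := by
      have : (0 : Fin (n+1)) < m := by
        rw [Fin.lt_def]
        rw [Fin.val_zero]; exact hcard_pos
      exact ne_of_gt this
    refine ⟨.inr ⟨m, hm0⟩, ?_⟩
    have hcol : co = fun i => if i < m then (0 : Fin 2) else 1 := by
      funext i
      rw [hthr i]
      by_cases h : (i : ℕ) < S.card
      · rw [if_pos h, if_pos (show i < m by rw [Fin.lt_def]; exact h)]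
      · rw [if_neg h, if_neg (show ¬ i < m by rw [Fin.lt_def]; exact h)]
    have hIio : Finset.Iio m = S := by
      ext x
      simp only [Finset.mem_Iio, hS, mem_filter, mem_univ, true_and]
      rw [Fin.lt_def]
      have hx := hthr x
      constructor
      · intro h
        rw [hx, if_pos h]
      · intro h
        by_contra hlt
        rw [hx, if_neg hlt] at h
        exact absurd h (by decide)
    have hpart : p = twoBlock (Finset.Iio m) (Iio_ne_empty hm0) (Iio_ne_univ m) := by
      apply Finpartition.ext
      rw [eq_twoBlock p co hiff ha.1 ha.2 (Finset.nonempty_iff_ne_empty.1 (card_pos.1 hcard_pos)) hSne]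
      rw [twoBlock_parts, twoBlock_parts, hIio]
    rw [show gA n (.inr ⟨m, hm0⟩) =
      ⟨twoBlock (Finset.Iio m) (Iio_ne_empty hm0) (Iio_ne_univ m),
        fun i => if i < m then 0 else 1⟩ from rfl, ← hpart, ← hcol]

/-- model map for side B -/
def gB (n : ℕ) : ({A : Finset (Fin (n+1)) // A ≠ ∅ ∧ A ≠ univ} ⊕ Fin (n+2)) → CPart (n+1) 2
  | .inl A => ⟨twoBlock A.1 A.2.1 A.2.2, fun i => if i ∈ A.1 then 0 else 1⟩
  | .inr m => ⟨indisc n, fun i => if (i : ℕ) < (m : ℕ) then 0 else 1⟩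

lemma gB_avoids (n : ℕ) (x : {A : Finset (Fin (n+1)) // A ≠ ∅ ∧ A ≠ univ} ⊕ Fin (n+2)) :
    ¬ Has121 (gB n x) ∧ ¬ Has1121 (gB n x) := by
  match x with
  | .inl A =>
    constructor
    · rintro ⟨i, j, hij, hsb, hlt⟩
      simp only [gB] at hsb hlt
      rw [sameBlock_twoBlock] at hsb
      by_cases h1 : i ∈ A.1
      · rw [if_pos h1, if_pos (hsb.1 h1)] at hlt
        exact absurd hlt (by decide)
      · rw [if_neg h1, if_neg (fun hj => h1 (hsb.2 hj))] at hlt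
        exact absurd hlt (by decide)
    · rintro ⟨i, j, hij, hns, heq⟩
      simp only [gB] at hns heq
      rw [sameBlock_twoBlock] at hns
      by_cases h1 : i ∈ A.1 <;> by_cases h2 : j ∈ A.1
      · exact hns (by simp [h1, h2])
      · rw [if_pos h1, if_neg h2] at heq
        exact absurd heq (by decide)
      · rw [if_neg h1, if_pos h2] at heq
        exact absurd heq (by decide)
      · exact hns (by simp [h1, h2])
  | .inr m =>
    constructor
    · rintro ⟨i, j, hij, _, hlt⟩
      simp only [gB] at hlt
      have hij' : (i : ℕ) < (j : ℕ) := hij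
      by_cases h1 : (i : ℕ) < (m : ℕ)
      · by_cases h2 : (j : ℕ) < (m : ℕ)
        · rw [if_pos h1, if_pos h2] at hlt
          exact absurd hlt (by decide)
        · rw [if_pos h1, if_neg h2] at hlt
          exact absurd hlt (by decide)
      · have h2 : ¬ (j : ℕ) < (m : ℕ) := by omega
        rw [if_neg h1, if_neg h2] at hlt
        exact absurd hlt (by decide)
    · rintro ⟨i, j, _, hns, _⟩
      exact hns (sameBlock_indisc i j)

lemma threshold_inj' {N : ℕ} (m m' : Fin (N+1))
    (h : (fun i : Fin N => if (i : ℕ) < (m : ℕ) then (0 : Fin 2) else 1) =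
      (fun i : Fin N => if (i : ℕ) < (m' : ℕ) then (0 : Fin 2) else 1)) : m = m' := by
  by_contra hne
  have hv : (m : ℕ) ≠ (m' : ℕ) := fun hh => hne (Fin.ext hh)
  rcases lt_or_gt_of_ne hv with hlt | hlt
  · have hmN : (m : ℕ) < N := lt_of_lt_of_le hlt (Nat.lt_succ_iff.1 m'.isLt)
    have := congrFun h ⟨m, hmN⟩
    rw [if_neg (lt_irrefl _), if_pos hlt] at this
    exact absurd this (by decide)
  · have hmN : (m' : ℕ) < N := lt_of_lt_of_le hlt (Nat.lt_succ_iff.1 m.isLt)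
    have := congrFun h ⟨m', hmN⟩
    rw [if_pos hlt, if_neg (lt_irrefl _)] at this
    exact absurd this (by decide)

lemma gB_injective (n : ℕ) : Function.Injective (gB n) := by
  rintro (A | m) (A' | m') h
  · have hc := congrArg CPart.col h
    simp only [gB] at hc
    apply congrArg Sum.inl
    apply Subtype.ext
    ext x
    have hx := congrFun hc x
    constructor <;> intro hmem
    · by_contra hmem'
      rw [if_pos hmem, if_neg hmem'] at hx
      exact absurd hx (by decide)
    · by_contra hmem'
      rw [if_neg hmem', if_pos hmem] at hx
      exact absurd hx (by decide)
  · exfalso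
    have hp := congrArg (fun σ => σ.part.parts) h
    simp only [gB, indisc_parts, twoBlock_parts] at hp
    have : (univ : Finset (Fin (n+1))) ∈ ({A.1, A.1ᶜ} : Finset (Finset (Fin (n+1)))) := by
      rw [hp]; simp
    exact univ_notmem_pair _ A.2.1 A.2.2 this
  · exfalso
    have hp := congrArg (fun σ => σ.part.parts) h
    simp only [gB, indisc_parts, twoBlock_parts] at hp
    have : (univ : Finset (Fin (n+1))) ∈ ({A'.1, A'.1ᶜ} : Finset (Finset (Fin (n+1)))) := by
      rw [← hp]; simp
    exact univ_notmem_pair _ A'.2.1 A'.2.2 this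
  · have hc := congrArg CPart.col h
    simp only [gB] at hc
    exact congrArg Sum.inr (threshold_inj' m m' hc)

lemma gB_surjective (n : ℕ) (p : Finpartition (univ : Finset (Fin (n+1)))) (co : Fin (n+1) → Fin 2)
    (hσ : ¬ Has121 (⟨p, co⟩ : CPart (n+1) 2) ∧ ¬ Has1121 (⟨p, co⟩ : CPart (n+1) 2)) :
    ∃ x, gB n x = ⟨p, co⟩ := by
  have cond1 : ∀ i j : Fin (n+1), i < j → SameBlock p i j → ¬ (co j < co i) :=
    fun i j hij hsb h => hσ.1 ⟨i, j, hij, hsb, h⟩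
  have cond2 : ∀ i j : Fin (n+1), i ≠ j → ¬ SameBlock p i j → co i ≠ co j := by
    intro i j hne hns heq
    rcases lt_or_gt_of_ne hne with h | h
    · exact hσ.2 ⟨i, j, h, hns, heq⟩
    · exact hσ.2 ⟨j, i, h, fun hs => hns (sameBlock_symm hs), heq.symm⟩
  have ecsb : ∀ i j, co i = co j → SameBlock p i j := by
    intro i j heq
    by_contra hns
    by_cases hne : i = j
    · exact hns (hne ▸ sameBlock_refl p i)
    · exact cond2 i j hne hns heq
  by_cases hall : ∀ i j, SameBlock p i j
  · have hmono : ∀ i j : Fin (n+1), i ≤ j → co i ≤ co j := by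
      intro i j hij
      rcases eq_or_lt_of_le hij with rfl | hlt
      · exact le_refl _
      · exact le_of_not_gt (cond1 i j hlt (hall i j))
    set S := univ.filter (fun x => co x = 0) with hS
    have hthr : ∀ i, co i = (if (i : ℕ) < S.card then 0 else 1) := threshold co hmono
    have hcard_le : S.card < n + 2 := by
      have := Finset.card_le_univ S
      simp only [Finset.card_univ, Fintype.card_fin] at this
      omega
    refine ⟨.inr ⟨S.card, hcard_le⟩, ?_⟩
    have hp : p = indisc n :=
      Finpartition.ext (by rw [parts_eq_singleton p hall, indisc_parts])
    have hcol : co = fun i : Fin (n+1) => if (i : ℕ) < S.card then (0 : Fin 2) else 1 :=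
      funext hthr
    rw [show gB n (.inr ⟨S.card, hcard_le⟩) =
      ⟨indisc n, fun i : Fin (n+1) => if (i : ℕ) < S.card then (0 : Fin 2) else 1⟩ from rfl,
      ← hp, ← hcol]
  · push_neg at hall
    obtain ⟨i0, j0, hns0⟩ := hall
    have hne0 : i0 ≠ j0 := fun h => hns0 (h ▸ sameBlock_refl p i0)
    have hne_col : co i0 ≠ co j0 := cond2 i0 j0 hne0 hns0
    obtain ⟨u, v, hu, hv, hnuv⟩ :
        ∃ u v : Fin (n+1), co u = 0 ∧ co v = 1 ∧ ¬ SameBlock p u v := by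
      rcases (show co i0 = 0 ∧ co j0 = 1 ∨ co i0 = 1 ∧ co j0 = 0 by omega) with ⟨h1, h2⟩ | ⟨h1, h2⟩
      · exact ⟨i0, j0, h1, h2, hns0⟩
      · exact ⟨j0, i0, h2, h1, fun hs => hns0 (sameBlock_symm hs)⟩
    have sbec : ∀ i j, SameBlock p i j → co i = co j := by
      intro i j hsb
      by_contra hneq
      obtain ⟨blk, hblk, hi, hj⟩ := hsb
      obtain ⟨x, hx, y, hy, hx0, hy1⟩ :
          ∃ x ∈ blk, ∃ y ∈ blk, co x = 0 ∧ co y = 1 := by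
        rcases (show co i = 0 ∧ co j = 1 ∨ co i = 1 ∧ co j = 0 by omega) with ⟨h1, h2⟩ | ⟨h1, h2⟩
        · exact ⟨i, hi, j, hj, h1, h2⟩
        · exact ⟨j, hj, i, hi, h2, h1⟩
      obtain ⟨b', hb', hub', hxb'⟩ := ecsb u x (by rw [hu, hx0])
      have hublk : u ∈ blk := (p.eq_of_mem_parts hb' hblk hxb' hx) ▸ hub'
      obtain ⟨b'', hb'', hvb'', hyb''⟩ := ecsb v y (by rw [hv, hy1])
      have hvblk : v ∈ blk := (p.eq_of_mem_parts hb'' hblk hyb'' hy) ▸ hvb''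
      exact hnuv ⟨blk, hblk, hublk, hvblk⟩
    have hiff : ∀ i j, SameBlock p i j ↔ co i = co j := fun i j => ⟨sbec i j, ecsb i j⟩
    set S := univ.filter (fun x => co x = 0) with hS
    have h0 : S ≠ ∅ := by
      apply Finset.nonempty_iff_ne_empty.1
      exact ⟨u, by simp [hS, hu]⟩
    have h1 : S ≠ univ := by
      intro h
      have : v ∈ S := by rw [h]; exact mem_univ v
      simp only [hS, mem_filter, mem_univ, true_and] at this
      omega
    refine ⟨.inl ⟨S, h0, h1⟩, ?_⟩
    have hp : p = twoBlock S h0 h1 := eq_twoBlock p co hiff hu hv h0 h1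
    have hcol : co = fun i => if i ∈ S then (0 : Fin 2) else 1 := by
      funext i
      by_cases h : co i = 0
      · rw [if_pos (by simp [hS, h]), h]
      · rw [if_neg (by simp [hS, h])]
        omega
    rw [show gB n (.inl ⟨S, h0, h1⟩) =
      ⟨twoBlock S h0 h1, fun i => if i ∈ S then (0 : Fin 2) else 1⟩ from rfl, ← hp, ← hcol]

theorem stmt17 : ∀ n : ℕ, 1 ≤ n →
    Nat.card {σ : CPart n 2 // ¬ Has1121 σ ∧ ¬ Has1221 σ} = Nat.card {σ : CPart n 2 // ¬ Has121 σ ∧ ¬ Has1121 σ} := by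
  intro n hn
  obtain ⟨N, rfl⟩ : ∃ N, n = N + 1 := ⟨n - 1, by omega⟩
  have hA : Nat.card {σ : CPart (N+1) 2 // ¬ Has1121 σ ∧ ¬ Has1221 σ} = 2 ^ (N+1) + N := by
    have hbij : Function.Bijective
        (fun x : (Fin (N+1) → Fin 2) ⊕ {m : Fin (N+1) // m ≠ 0} =>
          (⟨gA N x, gA_avoids N x⟩ : {σ : CPart (N+1) 2 // ¬ Has1121 σ ∧ ¬ Has1221 σ})) := by
      constructor
      · intro x y hxy
        exact gA_injective N (congrArg Subtype.val hxy)
      · rintro ⟨⟨p, co⟩, hσ⟩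
        obtain ⟨x, hx⟩ := gA_surjective N p co hσ
        exact ⟨x, Subtype.ext hx⟩
    rw [← Nat.card_eq_of_bijective _ hbij, Nat.card_sum, Nat.card_eq_fintype_card,
      Nat.card_eq_fintype_card, Fintype.card_fun, Fintype.card_fin, Fintype.card_fin]
    congr 1
    simp [Fintype.card_subtype_compl]
  have hB : Nat.card {σ : CPart (N+1) 2 // ¬ Has121 σ ∧ ¬ Has1121 σ}
      = (2 ^ (N+1) - 2) + (N + 2) := by
    have hbij : Function.Bijective
        (fun x : {A : Finset (Fin (N+1)) // A ≠ ∅ ∧ A ≠ univ} ⊕ Fin (N+2) =>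
          (⟨gB N x, gB_avoids N x⟩ : {σ : CPart (N+1) 2 // ¬ Has121 σ ∧ ¬ Has1121 σ})) := by
      constructor
      · intro x y hxy
        exact gB_injective N (congrArg Subtype.val hxy)
      · rintro ⟨⟨p, co⟩, hσ⟩
        obtain ⟨x, hx⟩ := gB_surjective N p co hσ
        exact ⟨x, Subtype.ext hx⟩
    rw [← Nat.card_eq_of_bijective _ hbij, Nat.card_sum, Nat.card_eq_fintype_card,
      Nat.card_eq_fintype_card, Fintype.card_fin]
    congr 1
    rw [Fintype.card_subtype]
    have hfil : univ.filter (fun A : Finset (Fin (N+1)) => A ≠ ∅ ∧ A ≠ univ)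
        = univ \ {∅, univ} := by
      ext A
      simp [not_or]
    rw [hfil, Finset.card_sdiff_of_subset (Finset.subset_univ _), Finset.card_univ, Fintype.card_finset,
      Fintype.card_fin, Finset.card_pair (Ne.symm Finset.univ_nonempty.ne_empty)]
  rw [hA, hB]
  have h2 : 2 ^ 1 ≤ 2 ^ (N + 1) := Nat.pow_le_pow_right (by norm_num) (by omega)
  omega
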